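/- arXiv:1412.1611 — 6 statements merged into one kernel-verified Lean document; each statement's English description precedes it below -/
import Mathlib

section
/- Let F_q be a finite field with q elements of characteristic greater than 2. If x, y, z, w ∈ F_q² are such that the line B = B(x,z) = B(y,w) is a well-defined common perpendicular bisector and B is non-isotropic, then ‖x−y‖ = ‖z−w‖. -/
/-- The "norm" of a point of `F × F`: `‖(x₁,x₂)‖ = x₁² + x₂²`. -/
def nrm {F : Type*} [Field F] (x : F × F) : F := x.1 ^ 2 + x.2 ^ 2

/-- The perpendicular bisector of `a` and `b`: the set of points equidistant from both. -/
def bisector {F : Type*} [Field F] (a b : F × F) : Set (F × F) :=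
  {c | nrm (c - a) = nrm (c - b)}

/-- `l` is an isotropic affine line: its direction vector `d` satisfies `‖d‖ = 0`. -/
def IsIsotropicLine {F : Type*} [Field F] (l : Set (F × F)) : Prop :=
  ∃ d p : F × F, d ≠ 0 ∧ nrm d = 0 ∧ l = {x | ∃ t : F, x = t • d + p}

/-!
The bisector `B(a, b)` is the line `{c | dot (2c - (a + b)) (b - a) = 0}` through the midpoint of `a`
and `b` with direction `rot (b - a)`, the quarter turn of `b - a`. If `B(y, w) = B(x, z)`, then
`w - y = s (z - x)` and the midpoints differ by `t · rot (z - x)`, so that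
`2 (x - y) = (s - 1) v - t · rot v` and `2 (z - w) = (1 - s) v - t · rot v` with `v = z - x`.
Since `v` and `rot v` are orthogonal and `‖rot v‖ = ‖v‖`, both have norm `((s - 1)² + t²) ‖v‖`.
-/

section

variable {F : Type*} [Field F]

def dot (u v : F × F) : F := u.1 * v.1 + u.2 * v.2

def rot (v : F × F) : F × F := (-v.2, v.1)

lemma rot_smul (s : F) (v : F × F) : rot (s • v) = s • rot v := by
  ext <;> simp [rot]

lemma rot_injective : Function.Injective (rot : F × F → F × F) := by
  intro u v h
  simp only [rot, Prod.mk.injEq, neg_inj] at h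
  exact Prod.ext h.2 h.1

lemma dot_rot_self (v : F × F) : dot (rot v) v = 0 := by
  simp only [dot, rot]
  ring

lemma nrm_smul (s : F) (v : F × F) : nrm (s • v) = s ^ 2 * nrm v := by
  simp only [nrm, Prod.smul_fst, Prod.smul_snd, smul_eq_mul]
  ring

lemma nrm_smul_add_smul_rot (s t : F) (v : F × F) :
    nrm (s • v + t • rot v) = (s ^ 2 + t ^ 2) * nrm v := by
  simp only [nrm, rot, Prod.fst_add, Prod.snd_add, Prod.smul_fst, Prod.smul_snd, smul_eq_mul]
  ring

lemma dot_eq_zero_iff_exists_eq_smul_rot {p v : F × F} (hv : v ≠ 0) :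
    dot p v = 0 ↔ ∃ t : F, p = t • rot v := by
  refine ⟨fun hp => ?_, ?_⟩
  · simp only [dot] at hp
    by_cases hv₁ : v.1 = 0
    · have hv₂ : v.2 ≠ 0 := fun hv₂ => hv (Prod.ext hv₁ hv₂)
      have hp₂ : p.2 = 0 := by simpa [hv₁, hv₂] using hp
      refine ⟨-p.1 / v.2, Prod.ext ?_ ?_⟩
      · simp [rot, hv₂]
      · simp [rot, hv₁, hp₂]
    · refine ⟨p.2 / v.1, Prod.ext ?_ ?_⟩
      · simp only [rot, Prod.smul_fst, smul_eq_mul]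
        field_simp
        linear_combination hp
      · simp [rot, hv₁]
  · rintro ⟨t, rfl⟩
    simp only [dot, rot, Prod.smul_fst, Prod.smul_snd, smul_eq_mul]
    ring

lemma mem_bisector_iff_dot {a b c : F × F} :
    c ∈ bisector a b ↔ dot ((2 : F) • c - (a + b)) (b - a) = 0 := by
  rw [bisector, Set.mem_ofPred_eq, ← sub_eq_zero]
  simp only [nrm, dot, Prod.fst_sub, Prod.snd_sub, Prod.fst_add, Prod.snd_add, Prod.smul_fst,
    Prod.smul_snd, smul_eq_mul]
  ring_nf

lemma mem_bisector_iff_exists {a b c : F × F} (hab : a ≠ b) :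
    c ∈ bisector a b ↔ ∃ t : F, (2 : F) • c - (a + b) = t • rot (b - a) :=
  mem_bisector_iff_dot.trans (dot_eq_zero_iff_exists_eq_smul_rot (sub_ne_zero.mpr hab.symm))

lemma exists_of_bisector_subset {a b c d : F × F} (h2 : (2 : F) ≠ 0) (hab : a ≠ b)
    (h : bisector c d ⊆ bisector a b) :
    ∃ s t : F, d - c = s • (b - a) ∧ c + d - (a + b) = t • rot (b - a) := by
  have hmid : (2 : F)⁻¹ • (c + d) ∈ bisector c d := by
    rw [mem_bisector_iff_dot, smul_inv_smul₀ h2, sub_self]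
    simp [dot]
  have hmid_rot : (2 : F)⁻¹ • (c + d + rot (d - c)) ∈ bisector c d := by
    rw [mem_bisector_iff_dot, smul_inv_smul₀ h2, add_sub_cancel_left]
    exact dot_rot_self _
  obtain ⟨t₀, ht₀⟩ := (mem_bisector_iff_exists hab).mp (h hmid)
  obtain ⟨t₁, ht₁⟩ := (mem_bisector_iff_exists hab).mp (h hmid_rot)
  rw [smul_inv_smul₀ h2] at ht₀ ht₁
  refine ⟨t₁ - t₀, t₀, rot_injective ?_, ht₀⟩
  rw [rot_smul]
  linear_combination (norm := module) ht₁ - ht₀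

end

theorem distance_decomposition_general (F : Type) [Field F]
    (hchar : 2 < ringChar F) (x y z w : F × F)
    (hxz : x ≠ z)
    (hB : bisector x z = bisector y w) :
    nrm (x - y) = nrm (z - w) := by
  have h2 : (2 : F) ≠ 0 := Ring.two_ne_zero (by omega)
  obtain ⟨s, t, hdiff, hsum⟩ := exists_of_bisector_subset h2 hxz hB.ge
  have key : nrm ((2 : F) • (x - y)) = nrm ((2 : F) • (z - w)) :=
    calc nrm ((2 : F) • (x - y)) = nrm ((s - 1) • (z - x) + (-t) • rot (z - x)) := by
          congr 1
          linear_combination (norm := module) hdiff - hsum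
      _ = ((s - 1) ^ 2 + (-t) ^ 2) * nrm (z - x) := nrm_smul_add_smul_rot _ _ _
      _ = ((1 - s) ^ 2 + (-t) ^ 2) * nrm (z - x) := by ring
      _ = nrm ((2 : F) • (z - w)) := by
          rw [← nrm_smul_add_smul_rot]
          congr 1
          linear_combination (norm := module) hdiff + hsum
  rwa [nrm_smul, nrm_smul, mul_right_inj' (pow_ne_zero 2 h2)] at key

/-- If `x,y,z,w ∈ F_q²` are such that `B = B(x,z) = B(y,w)` is a well-defined
(common) perpendicular bisector and `B` is non-isotropic, then `‖x−y‖ = ‖z−w‖`. -/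
theorem distance_decomposition (F : Type) [Field F] [Fintype F]
    (hchar : 2 < ringChar F) (x y z w : F × F)
    (hxz : x ≠ z) (hyw : y ≠ w)
    (hB : bisector x z = bisector y w)
    (hiso : ¬ IsIsotropicLine (bisector x z)) :
    nrm (x - y) = nrm (z - w) :=
  distance_decomposition_general F hchar x y z w hxz hB
end

section
/- Let F_q be a finite field with q elements of characteristic greater than 2. Suppose x, y, z, w ∈ F_q² with (x,y) ≠ (z,w) and ‖x−y‖ = ‖z−w‖ ≠ 0. If x−y ≠ z−w, then there is a unique rotation 𝒭 of F_q² with 𝒭(x) = z and 𝒭(y) = w, and no translation has this property. If x−y = z−w, then there is a unique translation 𝒯 with 𝒯(x) = z and 𝒯(y) = w, and no rotation has this property. -/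
/-- The linear map given by the rotation matrix `[[a,−b],[b,a]]`. -/
def rotLin {F : Type*} [Field F] (a b : F) (v : F × F) : F × F :=
  (a * v.1 - b * v.2, b * v.1 + a * v.2)

/-- The rotation about `u` by the rotation matrix `[[a,−b],[b,a]]`: `v ↦ R(v−u)+u`. -/
def rotAbout {F : Type*} [Field F] (a b : F) (u : F × F) : (F × F) → (F × F) :=
  fun v => rotLin a b (v - u) + u

/-- `f` is a rotation of `F²`. -/
def IsRotation {F : Type*} [Field F] (f : (F × F) → (F × F)) : Prop :=
  ∃ a b : F, a ^ 2 + b ^ 2 = 1 ∧ ∃ u : F × F, f = rotAbout a b u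

/-- `f` is a translation of `F²`. -/
def IsTranslation {F : Type*} [Field F] (f : (F × F) → (F × F)) : Prop :=
  ∃ d : F × F, f = fun v => v + d

/-- Unique solvability of `R p = q` in the rotation parameters `(a,b)` when `nrm p ≠ 0`. -/
lemma rot_solve {F : Type*} [Field F] (p1 p2 q1 q2 : F)
    (hd : p1 ^ 2 + p2 ^ 2 = q1 ^ 2 + q2 ^ 2) (h0 : p1 ^ 2 + p2 ^ 2 ≠ 0) :
    ∃ a b : F, a ^ 2 + b ^ 2 = 1 ∧ a * p1 - b * p2 = q1 ∧ b * p1 + a * p2 = q2 ∧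
      ∀ a' b' : F, a' * p1 - b' * p2 = q1 → b' * p1 + a' * p2 = q2 → a' = a ∧ b' = b := by
  refine ⟨(p1 * q1 + p2 * q2) / (p1 ^ 2 + p2 ^ 2),
      (p1 * q2 - p2 * q1) / (p1 ^ 2 + p2 ^ 2), ?_, ?_, ?_, ?_⟩
  · field_simp
    linear_combination (-(p1 ^ 2 + p2 ^ 2)) * hd
  · field_simp
    ring
  · field_simp
    ring
  · intro a' b' h1 h2
    constructor
    · field_simp
      linear_combination p1 * h1 + p2 * h2
    · field_simp
      linear_combination p1 * h2 - p2 * h1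

/-- Normal form of a rotation: affine map `v ↦ R v + f 0`, with `f 0 = 0` if `a = 1`. -/
lemma rot_form {F : Type*} [Field F] {f : (F × F) → (F × F)} (hf : IsRotation f) :
    ∃ a b : F, a ^ 2 + b ^ 2 = 1 ∧ (∀ v, f v = rotLin a b v + f 0) ∧ (a = 1 → f 0 = 0) := by
  obtain ⟨a, b, hab, u, rfl⟩ := hf
  refine ⟨a, b, hab, fun v => ?_, fun ha => ?_⟩
  · simp only [rotAbout, rotLin, Prod.ext_iff, Prod.fst_sub, Prod.snd_sub, Prod.fst_add,
      Prod.snd_add, Prod.fst_zero, Prod.snd_zero]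
    constructor <;> ring
  · subst ha
    have hb : b = 0 := by
      have hb2 : b ^ 2 = 0 := by linear_combination hab
      exact pow_eq_zero_iff (n := 2) (by norm_num) |>.mp hb2
    subst hb
    simp only [rotAbout, rotLin, Prod.ext_iff, Prod.fst_sub, Prod.snd_sub, Prod.fst_add,
      Prod.snd_add, Prod.fst_zero, Prod.snd_zero]
    constructor <;> ring

/-- Any affine rotation-matrix map with `a ≠ 1` is a rotation (about a suitable point). -/
lemma isRotation_affine {F : Type*} [Field F] (h2 : (2 : F) ≠ 0)
    (a b : F) (hab : a ^ 2 + b ^ 2 = 1) (ha : a ≠ 1) (c : F × F) :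
    IsRotation (fun v => rotLin a b v + c) := by
  have hD : (2 - 2 * a) ≠ 0 := by
    intro h
    apply ha
    have h1 : (2 : F) * (1 - a) = 0 := by linear_combination h
    rcases mul_eq_zero.mp h1 with h' | h'
    · exact absurd h' h2
    · exact (sub_eq_zero.mp h').symm
  refine ⟨a, b, hab, ⟨((1 - a) * c.1 - b * c.2) / (2 - 2 * a),
      (b * c.1 + (1 - a) * c.2) / (2 - 2 * a)⟩, ?_⟩
  funext v
  simp only [rotAbout, rotLin, Prod.ext_iff, Prod.fst_sub, Prod.snd_sub, Prod.fst_add,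
    Prod.snd_add]
  constructor
  · field_simp
    linear_combination (-c.1) * hab
  · field_simp
    linear_combination (-c.2) * hab

/-- Suppose `(x,y) ≠ (z,w)` and `‖x−y‖ = ‖z−w‖ ≠ 0`.  If `x−y ≠ z−w` then there is a
unique rotation sending `x ↦ z`, `y ↦ w`, and no translation does this.  If `x−y = z−w`
then there is a unique such translation, and no rotation does this. -/
theorem quadruples_and_rotations (F : Type) [Field F] [Fintype F]
    (hchar : 2 < ringChar F) (x y z w : F × F)
    (hne : (x, y) ≠ (z, w)) (hd : nrm (x - y) = nrm (z - w)) (h0 : nrm (x - y) ≠ 0) :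
    (x - y ≠ z - w →
      (∃! f : (F × F) → (F × F), IsRotation f ∧ f x = z ∧ f y = w) ∧
      ¬ ∃ f : (F × F) → (F × F), IsTranslation f ∧ f x = z ∧ f y = w) ∧
    (x - y = z - w →
      (∃! f : (F × F) → (F × F), IsTranslation f ∧ f x = z ∧ f y = w) ∧
      ¬ ∃ f : (F × F) → (F × F), IsRotation f ∧ f x = z ∧ f y = w) := by
  have h2 : (2 : F) ≠ 0 := by
    intro h
    have hdvd : ringChar F ∣ 2 := (ringChar.spec F 2).mp (by exact_mod_cast h)
    have := Nat.le_of_dvd (by norm_num) hdvd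
    omega
  obtain ⟨x1, x2⟩ := x
  obtain ⟨y1, y2⟩ := y
  obtain ⟨z1, z2⟩ := z
  obtain ⟨w1, w2⟩ := w
  have hd' : (x1 - y1) ^ 2 + (x2 - y2) ^ 2 = (z1 - w1) ^ 2 + (z2 - w2) ^ 2 := by
    simpa [nrm, Prod.mk_sub_mk] using hd
  have h0' : (x1 - y1) ^ 2 + (x2 - y2) ^ 2 ≠ 0 := by
    simpa [nrm, Prod.mk_sub_mk] using h0
  obtain ⟨a₀, b₀, hab0, hr1, hr2, huniq⟩ :=
    rot_solve (x1 - y1) (x2 - y2) (z1 - w1) (z2 - w2) hd' h0'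
  have hne' : ¬(x1 = z1 ∧ x2 = z2 ∧ y1 = w1 ∧ y2 = w2) := by
    intro ⟨e1, e2, e3, e4⟩
    exact hne (by simp [Prod.ext_iff, e1, e2, e3, e4])
  constructor
  · intro hpq
    have hpq' : ¬(x1 - y1 = z1 - w1 ∧ x2 - y2 = z2 - w2) := by
      intro ⟨e1, e2⟩
      exact hpq (by simp [Prod.mk_sub_mk, Prod.ext_iff, e1, e2])
    constructor
    · -- unique rotation
      have ha1 : a₀ ≠ 1 := by
        intro h
        have hb2 : b₀ ^ 2 = 0 := by rw [h] at hab0; linear_combination hab0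
        have hb : b₀ = 0 := pow_eq_zero_iff (n := 2) (by norm_num) |>.mp hb2
        rw [h, hb] at hr1 hr2
        exact hpq' ⟨by linear_combination hr1, by linear_combination hr2⟩
      refine ⟨fun v => rotLin a₀ b₀ v + ((z1, z2) - rotLin a₀ b₀ (x1, x2)),
        ⟨isRotation_affine h2 a₀ b₀ hab0 ha1 _, by simp, ?_⟩, ?_⟩
      · -- f y = w
        show rotLin a₀ b₀ (y1, y2) + ((z1, z2) - rotLin a₀ b₀ (x1, x2)) = (w1, w2)
        simp only [rotLin, Prod.mk_sub_mk, Prod.mk_add_mk, Prod.ext_iff]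
        constructor
        · linear_combination -hr1
        · linear_combination -hr2
      · rintro g ⟨hg, hgx, hgy⟩
        obtain ⟨a, b, hab, hform, _⟩ := rot_form hg
        have hx := (hform (x1, x2)).symm.trans hgx
        have hy := (hform (y1, y2)).symm.trans hgy
        have hx1 : a * x1 - b * x2 + (g 0).1 = z1 := congrArg Prod.fst hx
        have hx2 : b * x1 + a * x2 + (g 0).2 = z2 := congrArg Prod.snd hx
        have hy1 : a * y1 - b * y2 + (g 0).1 = w1 := congrArg Prod.fst hy
        have hy2 : b * y1 + a * y2 + (g 0).2 = w2 := congrArg Prod.snd hy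
        obtain ⟨haa, hbb⟩ := huniq a b (by linear_combination hx1 - hy1)
          (by linear_combination hx2 - hy2)
        subst haa; subst hbb
        have hg0 : g 0 = (z1, z2) - rotLin a b (x1, x2) := eq_sub_of_add_eq' hx
        funext v
        rw [hform v, hg0]
    · rintro ⟨f, ⟨d, rfl⟩, hfx, hfy⟩
      simp only at hfx hfy
      have hfx1 : x1 + d.1 = z1 := congrArg Prod.fst hfx
      have hfx2 : x2 + d.2 = z2 := congrArg Prod.snd hfx
      have hfy1 : y1 + d.1 = w1 := congrArg Prod.fst hfy
      have hfy2 : y2 + d.2 = w2 := congrArg Prod.snd hfy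
      exact hpq' ⟨by linear_combination hfx1 - hfy1, by linear_combination hfx2 - hfy2⟩
  · intro hpq
    have hpq1 : x1 - y1 = z1 - w1 := congrArg Prod.fst hpq
    have hpq2 : x2 - y2 = z2 - w2 := congrArg Prod.snd hpq
    constructor
    · refine ⟨fun v => v + ((z1, z2) - (x1, x2)), ⟨⟨(z1, z2) - (x1, x2), rfl⟩, by ring, ?_⟩, ?_⟩
      · show (y1, y2) + ((z1, z2) - (x1, x2)) = (w1, w2)
        simp only [Prod.mk_sub_mk, Prod.mk_add_mk, Prod.ext_iff]
        constructor
        · linear_combination -hpq1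
        · linear_combination -hpq2
      · rintro g ⟨⟨d, rfl⟩, hgx, hgy⟩
        simp only at hgx
        have hdz : d = (z1, z2) - (x1, x2) := by linear_combination hgx
        rw [hdz]
    · rintro ⟨g, hg, hgx, hgy⟩
      obtain ⟨a, b, hab, hform, hid⟩ := rot_form hg
      have hx := (hform (x1, x2)).symm.trans hgx
      have hy := (hform (y1, y2)).symm.trans hgy
      have hx1 : a * x1 - b * x2 + (g 0).1 = z1 := congrArg Prod.fst hx
      have hx2 : b * x1 + a * x2 + (g 0).2 = z2 := congrArg Prod.snd hx
      have hy1 : a * y1 - b * y2 + (g 0).1 = w1 := congrArg Prod.fst hy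
      have hy2 : b * y1 + a * y2 + (g 0).2 = w2 := congrArg Prod.snd hy
      obtain ⟨haa, hbb⟩ := huniq a b (by linear_combination hx1 - hy1)
        (by linear_combination hx2 - hy2)
      obtain ⟨ha1, hb1⟩ := huniq 1 0 (by linear_combination hpq1) (by linear_combination hpq2)
      have ha : a = 1 := haa.trans ha1.symm
      have hb : b = 0 := hbb.trans hb1.symm
      have hg00 : g 0 = 0 := hid ha
      rw [ha, hb, hg00] at hx1 hx2 hy1 hy2
      simp only [Prod.fst_zero, Prod.snd_zero] at hx1 hx2 hy1 hy2
      exact hne' ⟨by linear_combination hx1, by linear_combination hx2,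
        by linear_combination hy1, by linear_combination hy2⟩
end

section
/- Let F_q be a finite field with q elements of characteristic greater than 2. Any non-trivial rotation of F_q² can be written as a composition 𝒮₂ ∘ 𝒮₁ of an ordered pair of reflections in exactly q−1 ways when q ≡ 1 (mod 4), and in exactly q+1 ways when q ≡ 3 (mod 4). Any translation by a vector d with ‖d‖ ≠ 0 can be written as a composition of an ordered pair of reflections in exactly q ways. A non-trivial translation by a vector d with ‖d‖ = 0 cannot be written as a composition of a pair of reflections. -/
/-- The linear map given by the reflection matrix `[[a,b],[b,−a]]`. -/
def refLin {F : Type*} [Field F] (a b : F) (v : F × F) : F × F :=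
  (a * v.1 + b * v.2, b * v.1 - a * v.2)

/-- The reflection about `u` by the reflection matrix `[[a,b],[b,−a]]`: `v ↦ S(v−u)+u`. -/
def refAbout {F : Type*} [Field F] (a b : F) (u : F × F) : (F × F) → (F × F) :=
  fun v => refLin a b (v - u) + u

/-- `f` is a reflection of `F²`. -/
def IsReflection {F : Type*} [Field F] (f : (F × F) → (F × F)) : Prop :=
  ∃ a b : F, a ^ 2 + b ^ 2 = 1 ∧ ∃ u : F × F, f = refAbout a b u

/-- The set of ordered pairs of reflections `(𝒮₁, 𝒮₂)` whose composition `𝒮₂ ∘ 𝒮₁` is `f`. -/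
def reflDecomps {F : Type*} [Field F] (f : (F × F) → (F × F)) :
    Set (((F × F) → (F × F)) × ((F × F) → (F × F))) :=
  {p | IsReflection p.1 ∧ IsReflection p.2 ∧ p.2 ∘ p.1 = f}


/-!
Identify `F × F` with `F[i] = F[X]/(X² + 1)`, so that a rotation is `z ↦ r z + t` with `N r = 1`
and a reflection is `z ↦ w z̄ + c` with `N w = 1` and `w c̄ = -c`. Reflections are involutions, so
a decomposition `f = 𝒮₂ ∘ 𝒮₁` is determined by `𝒮₁`, and it exists iff `f ∘ 𝒮₁` is a reflection;
for `f z = r z + t` this is the linear condition `(r - 1) c = -(t + r w t̄)` on the parameters of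
`𝒮₁`. If `r ≠ 1` then `r - 1` is invertible, so each `w` of norm one admits exactly one `c`, and
the count is the number of points on the conic `x² + y² = 1`: `q - 1` if `-1` is a square
(parametrise by `Fˣ`) and `q + 1` otherwise (stereographic projection). If `r = 1` the condition
reads `w t̄ = -t`: when `N t ≠ 0` it forces `w = -t² / N t` and leaves `c` free on the line `F t`;
when `N t = 0` it forces `t² = 0`, hence `t = 0`.
-/

open QuadraticAlgebra

abbrev GaussPlane (F : Type*) [Field F] := QuadraticAlgebra F (-1) 0

section

variable {F : Type*} [Field F]

namespace GaussPlane

lemma norm_eq (z : GaussPlane F) : norm z = z.re ^ 2 + z.im ^ 2 := by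
  simp only [norm_def]
  ring

lemma mul_star_eq_one {w : GaussPlane F} (hw : norm w = 1) : w * star w = 1 := by
  rw [← algebraMap_norm_eq_mul_star, hw, map_one]

@[simp] lemma star_algebraMap (x : F) :
    star (algebraMap F (GaussPlane F) x) = algebraMap F _ x := by
  ext <;> simp

end GaussPlane

open GaussPlane

def toPlane : F × F ≃ GaussPlane F := (equivProd (-1) 0).symm

@[simp] lemma toPlane_apply (v : F × F) : toPlane v = ⟨v.1, v.2⟩ := rfl

@[simp] lemma toPlane_symm_apply (z : GaussPlane F) : toPlane.symm z = (z.re, z.im) := rfl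

lemma norm_toPlane (v : F × F) : norm (toPlane v) = nrm v := by
  rw [norm_eq]
  rfl

def reflMap (w c : GaussPlane F) (v : F × F) : F × F := toPlane.symm (w * star (toPlane v) + c)

def affMap (r t : GaussPlane F) (v : F × F) : F × F := toPlane.symm (r * toPlane v + t)

lemma refAbout_eq_reflMap (a b : F) (u : F × F) :
    refAbout a b u = reflMap ⟨a, b⟩ (toPlane u - ⟨a, b⟩ * star (toPlane u)) := by
  funext v
  simp only [refAbout, refLin, reflMap, toPlane_apply, toPlane_symm_apply, Prod.ext_iff]
  constructor <;> simp <;> ring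

lemma rotAbout_eq_affMap (a b : F) (u : F × F) :
    rotAbout a b u = affMap ⟨a, b⟩ (toPlane u - ⟨a, b⟩ * toPlane u) := by
  funext v
  simp only [rotAbout, rotLin, affMap, toPlane_apply, toPlane_symm_apply, Prod.ext_iff]
  constructor <;> simp <;> ring

lemma add_eq_affMap (d : F × F) : (fun v => v + d) = affMap 1 (toPlane d) := by
  funext v
  simp [affMap, Prod.ext_iff]

lemma affMap_comp_reflMap (r t w c : GaussPlane F) :
    affMap r t ∘ reflMap w c = reflMap (r * w) (r * c + t) := by
  funext v
  simp only [Function.comp_apply, affMap, reflMap, Equiv.apply_symm_apply]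
  congr 1
  ring

lemma reflMap_injective :
    Function.Injective (fun p : GaussPlane F × GaussPlane F => reflMap p.1 p.2) := by
  rintro ⟨w, c⟩ ⟨w', c'⟩ h
  have h0 := congrFun h (toPlane.symm 0)
  have h1 := congrFun h (toPlane.symm 1)
  simp only [reflMap, Equiv.apply_symm_apply, star_zero, star_one, mul_zero, mul_one, zero_add,
    toPlane.symm.injective.eq_iff] at h0 h1
  subst h0
  simp_all

def reflParams (F : Type*) [Field F] : Set (GaussPlane F × GaussPlane F) :=
  {p | norm p.1 = 1 ∧ p.1 * star p.2 = -p.2}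

lemma isReflection_iff (h2 : (2 : F) ≠ 0) {g : F × F → F × F} :
    IsReflection g ↔ ∃ p ∈ reflParams F, g = reflMap p.1 p.2 := by
  constructor
  · rintro ⟨a, b, hab, u, rfl⟩
    have hw : norm (⟨a, b⟩ : GaussPlane F) = 1 := by rw [norm_eq]; exact hab
    refine ⟨(_, _), ⟨hw, ?_⟩, refAbout_eq_reflMap a b u⟩
    simp only [star_sub, star_mul, star_star]
    linear_combination -(toPlane u) * mul_star_eq_one hw
  · rintro ⟨⟨w, c⟩, ⟨hw, hc⟩, rfl⟩
    refine ⟨w.re, w.im, by rw [← norm_eq, hw], toPlane.symm (algebraMap F _ 2⁻¹ * c), ?_⟩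
    have h2' : algebraMap F (GaussPlane F) 2⁻¹ * 2 = 1 := by
      rw [← map_ofNat (algebraMap F (GaussPlane F)) 2, ← map_mul, inv_mul_cancel₀ h2, map_one]
    rw [refAbout_eq_reflMap, Equiv.apply_symm_apply]
    congr 1
    simp only [star_mul, star_algebraMap, mk_eta]
    linear_combination algebraMap F (GaussPlane F) 2⁻¹ * hc - c * h2'

lemma isReflection_reflMap_iff (h2 : (2 : F) ≠ 0) {w c : GaussPlane F} :
    IsReflection (reflMap w c) ↔ (w, c) ∈ reflParams F := by
  rw [isReflection_iff h2]
  refine ⟨fun ⟨p, hp, h⟩ => ?_, fun h => ⟨_, h, rfl⟩⟩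
  rwa [@reflMap_injective F _ (w, c) p h]

lemma reflMap_comp_self {p : GaussPlane F × GaussPlane F} (hp : p ∈ reflParams F) :
    reflMap p.1 p.2 ∘ reflMap p.1 p.2 = id := by
  funext v
  apply toPlane.injective
  simp only [Function.comp_apply, reflMap, Equiv.apply_symm_apply, star_add, star_mul,
    star_star, id]
  linear_combination (toPlane v) * mul_star_eq_one hp.1 + hp.2

lemma reflDecomps_eq_image (h2 : (2 : F) ≠ 0) (f : F × F → F × F) :
    reflDecomps f = (fun p => (reflMap p.1 p.2, f ∘ reflMap p.1 p.2)) ''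
      {p ∈ reflParams F | IsReflection (f ∘ reflMap p.1 p.2)} := by
  ext ⟨g₁, g₂⟩
  constructor
  · rintro ⟨hg₁, hg₂, rfl⟩
    obtain ⟨p, hp, rfl⟩ := (isReflection_iff h2).mp hg₁
    have h : (g₂ ∘ reflMap p.1 p.2) ∘ reflMap p.1 p.2 = g₂ := by
      rw [Function.comp_assoc, reflMap_comp_self hp, Function.comp_id]
    exact ⟨p, ⟨hp, by rwa [h]⟩, by simp only [h]⟩
  · rintro ⟨p, ⟨hp, hf⟩, h⟩
    simp only [Prod.mk.injEq] at h
    obtain ⟨rfl, rfl⟩ := h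
    refine ⟨(isReflection_iff h2).mpr ⟨p, hp, rfl⟩, hf, ?_⟩
    rw [Function.comp_assoc, reflMap_comp_self hp, Function.comp_id]

lemma ncard_reflDecomps (h2 : (2 : F) ≠ 0) (f : F × F → F × F) :
    (reflDecomps f).ncard = {p ∈ reflParams F | IsReflection (f ∘ reflMap p.1 p.2)}.ncard := by
  rw [reflDecomps_eq_image h2, Set.ncard_image_of_injective]
  exact fun p q h => reflMap_injective (congrArg Prod.fst h)

def decompParams (r t : GaussPlane F) : Set (GaussPlane F × GaussPlane F) :=
  {p ∈ reflParams F | (r - 1) * p.2 = -(t + r * p.1 * star t)}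

lemma mem_reflParams_comp_iff {r t : GaussPlane F} (hr : norm r = 1)
    {p : GaussPlane F × GaussPlane F} (hp : p ∈ reflParams F) :
    (r * p.1, r * p.2 + t) ∈ reflParams F ↔ (r - 1) * p.2 = -(t + r * p.1 * star t) := by
  have hr' := mul_star_eq_one hr
  simp only [reflParams, Set.mem_ofPred_eq, map_mul, hr, hp.1, mul_one, true_and, star_add,
    star_mul]
  constructor <;> intro h
  · linear_combination h - hp.2 - p.1 * star p.2 * hr'
  · linear_combination h + hp.2 + p.1 * star p.2 * hr'

lemma ncard_reflDecomps_affMap (h2 : (2 : F) ≠ 0) {r : GaussPlane F} (hr : norm r = 1)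
    (t : GaussPlane F) : (reflDecomps (affMap r t)).ncard = (decompParams r t).ncard := by
  rw [ncard_reflDecomps h2]
  congr 1
  ext p
  simp only [decompParams, Set.mem_ofPred_eq, affMap_comp_reflMap, isReflection_reflMap_iff h2]
  exact and_congr_right (mem_reflParams_comp_iff hr)

lemma isUnit_sub_one_of_norm_eq_one (h2 : (2 : F) ≠ 0) {r : GaussPlane F} (hr : norm r = 1)
    (hr1 : r ≠ 1) : IsUnit (r - 1) := by
  rw [isUnit_iff_norm_isUnit, isUnit_iff_ne_zero]
  intro h
  rw [norm_eq] at hr h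
  simp only [re_sub, re_one, im_sub, im_one, sub_zero] at h
  have hre : r.re = 1 := by
    have : 2 * (1 - r.re) = 0 := by linear_combination h - hr
    exact (sub_eq_zero.mp ((mul_eq_zero.mp this).resolve_left h2)).symm
  have him : r.im = 0 :=
    pow_eq_zero_iff two_ne_zero |>.mp (by rw [hre] at hr; linear_combination hr)
  exact hr1 (QuadraticAlgebra.ext hre him)

lemma mul_star_eq_neg_of_sub_one_mul_eq {r t w c : GaussPlane F} (hr : norm r = 1)
    (hu : IsUnit (r - 1)) (hw : norm w = 1) (h : (r - 1) * c = -(t + r * w * star t)) :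
    w * star c = -c := by
  have hstar := congrArg star h
  simp only [star_mul, star_sub, star_neg, star_add, star_one, star_star] at hstar
  -- conjugating `h` and multiplying by `-r w` gives `(r - 1) (w c̄) = -(r - 1) c`
  have key : (r - 1) * (w * star c + c) = 0 := by
    linear_combination (-r * w) * hstar + h + (w * star c + t * w * star w) * mul_star_eq_one hr
      + t * mul_star_eq_one hw
  exact eq_neg_of_add_eq_zero_left ((hu.mul_right_eq_zero).mp key)

lemma ncard_decompParams_of_ne_one (h2 : (2 : F) ≠ 0) {r : GaussPlane F} (hr : norm r = 1)
    (hr1 : r ≠ 1) (t : GaussPlane F) :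
    (decompParams r t).ncard = {w : GaussPlane F | norm w = 1}.ncard := by
  have hu := isUnit_sub_one_of_norm_eq_one h2 hr hr1
  have himage : decompParams r t =
      (fun w => (w, Ring.inverse (r - 1) * -(t + r * w * star t))) '' {w | norm w = 1} := by
    ext ⟨w, c⟩
    simp only [decompParams, reflParams, Set.mem_ofPred_eq, Set.mem_image, Prod.mk.injEq]
    constructor
    · rintro ⟨⟨hw, -⟩, h⟩
      exact ⟨w, hw, rfl, by rw [← h, ← mul_assoc, Ring.inverse_mul_cancel _ hu, one_mul]⟩
    · rintro ⟨w, hw, rfl, rfl⟩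
      have h := Ring.mul_inverse_cancel_left _ (-(t + r * w * star t)) hu
      exact ⟨⟨hw, mul_star_eq_neg_of_sub_one_mul_eq hr hu hw h⟩, h⟩
  rw [himage, Set.ncard_image_of_injective]
  exact fun w w' h => congrArg Prod.fst h

def unitsParam (i : F) (x : Fˣ) : GaussPlane F := ⟨(x + ↑x⁻¹) / 2, (x - ↑x⁻¹) / (2 * i)⟩

lemma unitsParam_re_add_mul_im (h2 : (2 : F) ≠ 0) {i : F} (hi0 : i ≠ 0) (x : Fˣ) :
    (unitsParam i x).re + i * (unitsParam i x).im = x := by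
  simp only [unitsParam]
  field_simp
  ring

lemma setOf_norm_eq_one_eq_range_unitsParam (h2 : (2 : F) ≠ 0) {i : F} (hi : i ^ 2 = -1) :
    {z : GaussPlane F | norm z = 1} = Set.range (unitsParam i) := by
  have hi0 : i ≠ 0 := by rintro rfl; simp at hi
  ext z
  rw [Set.mem_ofPred_eq, norm_eq]
  constructor
  · intro hz
    have hx : (z.re + i * z.im) * (z.re - i * z.im) = 1 := by
      linear_combination hz - z.im ^ 2 * hi
    refine ⟨⟨_, _, hx, by rw [mul_comm, hx]⟩, ?_⟩
    ext <;> simp only [unitsParam, Units.inv_mk] <;> field_simp <;> ring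
  · rintro ⟨x, rfl⟩
    have hx := x.mul_inv
    simp only [unitsParam]
    field_simp
    linear_combination (-4) * hx + (((x : F) + ↑x⁻¹) ^ 2 - 4) * hi

lemma ncard_norm_eq_one_of_isSquare_neg_one (h2 : (2 : F) ≠ 0) (h : IsSquare (-1 : F)) :
    {z : GaussPlane F | norm z = 1}.ncard = Nat.card F - 1 := by
  obtain ⟨i, hi⟩ := h
  replace hi : i ^ 2 = -1 := by rw [sq, hi]
  have hi0 : i ≠ 0 := by rintro rfl; simp at hi
  rw [setOf_norm_eq_one_eq_range_unitsParam h2 hi, Set.ncard_range_of_injective, Nat.card_units]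
  intro x y h
  ext
  rw [← unitsParam_re_add_mul_im h2 hi0 x, ← unitsParam_re_add_mul_im h2 hi0 y, h]

def stereoParam (m : F) : GaussPlane F := ⟨(1 - m ^ 2) / (1 + m ^ 2), 2 * m / (1 + m ^ 2)⟩

lemma one_add_sq_ne_zero (h : ¬IsSquare (-1 : F)) (m : F) : 1 + m ^ 2 ≠ 0 :=
  fun hm => h ⟨m, by linear_combination -hm⟩

lemma stereoParam_im_div (h2 : (2 : F) ≠ 0) {m : F} (hm : 1 + m ^ 2 ≠ 0) :
    (stereoParam m).im / (1 + (stereoParam m).re) = m := by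
  have hsum : 1 + m ^ 2 + (1 - m ^ 2) = (2 : F) := by ring
  simp only [stereoParam]
  field_simp
  rw [hsum, mul_div_cancel_left₀ _ h2]

lemma neg_one_notMem_range_stereoParam (h2 : (2 : F) ≠ 0) (h : ¬IsSquare (-1 : F)) :
    (-1 : GaussPlane F) ∉ Set.range stereoParam := by
  rintro ⟨m, hm⟩
  have hre := congrArg QuadraticAlgebra.re hm
  simp only [stereoParam, re_neg, re_one] at hre
  field_simp [one_add_sq_ne_zero h m] at hre
  exact h2 (by linear_combination hre)

lemma setOf_norm_eq_one_eq_insert_range_stereoParam (h2 : (2 : F) ≠ 0)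
    (h : ¬IsSquare (-1 : F)) :
    {z : GaussPlane F | norm z = 1} = insert (-1) (Set.range stereoParam) := by
  ext z
  rw [Set.mem_ofPred_eq, norm_eq, Set.mem_insert_iff, Set.mem_range]
  constructor
  · intro hz
    by_cases hre : z.re = -1
    · left
      have him : z.im = 0 :=
        pow_eq_zero_iff two_ne_zero |>.mp (by rw [hre] at hz; linear_combination hz)
      ext <;> simp [hre, him]
    · right
      have hden : 1 + z.re ≠ 0 := fun h0 => hre (by linear_combination h0)
      have hden' : (1 + z.re) ^ 2 + z.im ^ 2 ≠ 0 := fun h0 =>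
        mul_ne_zero h2 hden (by linear_combination h0 - hz)
      refine ⟨z.im / (1 + z.re), ?_⟩
      ext <;> simp only [stereoParam] <;> field_simp
      · linear_combination (-(1 + z.re)) * hz
      · linear_combination (-z.im) * hz
  · rintro (rfl | ⟨m, rfl⟩)
    · simp
    · simp only [stereoParam]
      field_simp [one_add_sq_ne_zero h m]
      ring

lemma ncard_norm_eq_one_of_not_isSquare_neg_one [Finite F] (h2 : (2 : F) ≠ 0)
    (h : ¬IsSquare (-1 : F)) : {z : GaussPlane F | norm z = 1}.ncard = Nat.card F + 1 := by
  rw [setOf_norm_eq_one_eq_insert_range_stereoParam h2 h,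
    Set.ncard_insert_of_notMem (neg_one_notMem_range_stereoParam h2 h),
    Set.ncard_range_of_injective]
  intro m m' hm
  rw [← stereoParam_im_div h2 (one_add_sq_ne_zero h m),
    ← stereoParam_im_div h2 (one_add_sq_ne_zero h m'), hm]

lemma decompParams_one (t : GaussPlane F) :
    decompParams 1 t = {p ∈ reflParams F | p.1 * star t = -t} := by
  ext p
  simp only [decompParams, Set.mem_ofPred_eq, sub_self, zero_mul, one_mul, zero_add,
    eq_neg_iff_add_eq_zero, add_comm]

lemma decompParams_one_eq_range (h2 : (2 : F) ≠ 0) {t : GaussPlane F} (ht : norm t ≠ 0) :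
    decompParams 1 t =
      Set.range (fun x : F => (-(algebraMap F _ (norm t)⁻¹ * t * t), x • t)) := by
  have hN : algebraMap F (GaussPlane F) (norm t)⁻¹ * (t * star t) = 1 := by
    rw [← algebraMap_norm_eq_mul_star, ← map_mul, inv_mul_cancel₀ ht, map_one]
  rw [decompParams_one]
  ext ⟨w, c⟩
  simp only [reflParams, Set.mem_ofPred_eq, Set.mem_range, Prod.mk.injEq]
  constructor
  · rintro ⟨⟨-, hc⟩, hwt⟩
    have hself : star (c * star t) = c * star t := by
      simp only [star_mul, star_star]
      linear_combination star c * hwt - star t * hc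
    refine ⟨(c * star t).re / norm t, ?_, ?_⟩
    · linear_combination w * hN - algebraMap F _ (norm t)⁻¹ * t * hwt
    · have him : (c * star t).im = 0 := by
        have h := congrArg QuadraticAlgebra.im hself
        rw [im_star] at h
        exact (mul_eq_zero.mp (by linear_combination -h : 2 * (c * star t).im = 0)).resolve_left h2
      have hreal : c * star t = algebraMap F _ (c * star t).re := QuadraticAlgebra.ext rfl him
      calc ((c * star t).re / norm t) • t
          = algebraMap F _ (norm t)⁻¹ * (algebraMap F _ (c * star t).re * t) := by
            rw [Algebra.smul_def, div_eq_inv_mul, map_mul, mul_assoc]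
        _ = c := by
            rw [← hreal]
            linear_combination c * hN
  · rintro ⟨x, rfl, rfl⟩
    refine ⟨⟨?_, ?_⟩, ?_⟩
    · simp only [map_mul, QuadraticAlgebra.norm_algebraMap, QuadraticAlgebra.norm_neg]
      field_simp
    · have hstar : star (x • t) = x • star t := by ext <;> simp
      rw [hstar, mul_smul_comm, ← smul_neg]
      congr 1
      linear_combination (-t) * hN
    · linear_combination (-t) * hN

lemma ncard_decompParams_one (h2 : (2 : F) ≠ 0) {t : GaussPlane F} (ht : norm t ≠ 0) :
    (decompParams 1 t).ncard = Nat.card F := by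
  have ht0 : t ≠ 0 := by rintro rfl; simp at ht
  rw [decompParams_one_eq_range h2 ht, Set.ncard_range_of_injective]
  exact fun x y h => smul_left_injective F ht0 (congrArg Prod.snd h)

lemma eq_zero_of_norm_eq_zero_of_mul_star_eq_neg (h2 : (2 : F) ≠ 0) {w t : GaussPlane F}
    (ht : norm t = 0) (h : w * star t = -t) : t = 0 := by
  have hN := algebraMap_norm_eq_mul_star t
  rw [ht, map_zero] at hN
  have hsq : t * t = 0 := by linear_combination t * h + w * hN
  have hre := congrArg QuadraticAlgebra.re hsq
  rw [norm_eq] at ht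
  simp only [re_mul, re_zero] at hre
  have hre0 : t.re = 0 := pow_eq_zero_iff two_ne_zero |>.mp
    ((mul_eq_zero.mp (by linear_combination ht + hre : 2 * t.re ^ 2 = 0)).resolve_left h2)
  have him0 : t.im = 0 :=
    pow_eq_zero_iff two_ne_zero |>.mp (by rw [hre0] at ht; linear_combination ht)
  exact QuadraticAlgebra.ext hre0 him0

lemma decompParams_one_eq_empty (h2 : (2 : F) ≠ 0) {t : GaussPlane F} (ht0 : t ≠ 0)
    (ht : norm t = 0) : decompParams 1 t = ∅ := by
  rw [decompParams_one]
  exact Set.eq_empty_of_forall_notMem fun p hp =>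
    ht0 (eq_zero_of_norm_eq_zero_of_mul_star_eq_neg h2 ht hp.2)

end

/-- Any non-trivial rotation decomposes into an ordered pair of reflections in exactly
`q−1` ways when `q ≡ 1 (mod 4)` and `q+1` ways when `q ≡ 3 (mod 4)`.  A translation by
`d` with `‖d‖ ≠ 0` decomposes in exactly `q` ways.  A non-trivial translation by an
isotropic vector admits no such decomposition. -/
theorem decompositions_into_reflections (F : Type) [Field F] [Fintype F]
    (hchar : 2 < ringChar F) :
    (∀ a b : F, a ^ 2 + b ^ 2 = 1 → (a, b) ≠ ((1 : F), (0 : F)) → ∀ u : F × F,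
      (Fintype.card F % 4 = 1 → (reflDecomps (rotAbout a b u)).ncard = Fintype.card F - 1) ∧
      (Fintype.card F % 4 = 3 → (reflDecomps (rotAbout a b u)).ncard = Fintype.card F + 1)) ∧
    (∀ d : F × F, nrm d ≠ 0 →
      (reflDecomps (fun v => v + d)).ncard = Fintype.card F) ∧
    (∀ d : F × F, d ≠ 0 → nrm d = 0 →
      (reflDecomps (fun v => v + d)).ncard = 0) := by
  have h2 : (2 : F) ≠ 0 := Ring.two_ne_zero (by omega)
  refine ⟨fun a b hab hne u => ?_, fun d hd => ?_, fun d hd0 hd => ?_⟩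
  · have hr : norm (⟨a, b⟩ : GaussPlane F) = 1 := by rw [GaussPlane.norm_eq]; exact hab
    have hr1 : (⟨a, b⟩ : GaussPlane F) ≠ 1 := fun h => hne (by
      rw [QuadraticAlgebra.ext_iff] at h
      exact Prod.ext h.1 h.2)
    rw [rotAbout_eq_affMap, ncard_reflDecomps_affMap h2 hr, ncard_decompParams_of_ne_one h2 hr hr1]
    refine ⟨fun hq => ?_, fun hq => ?_⟩
    · rw [ncard_norm_eq_one_of_isSquare_neg_one h2
        (FiniteField.isSquare_neg_one_iff.mpr (by omega)), Nat.card_eq_fintype_card]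
    · rw [ncard_norm_eq_one_of_not_isSquare_neg_one h2
        (by rw [FiniteField.isSquare_neg_one_iff]; omega), Nat.card_eq_fintype_card]
  · rw [add_eq_affMap, ncard_reflDecomps_affMap h2 (map_one _),
      ncard_decompParams_one h2 (by rwa [norm_toPlane]), Nat.card_eq_fintype_card]
  · have hd0' : toPlane d ≠ 0 := by simpa [QuadraticAlgebra.ext_iff, Prod.ext_iff] using hd0
    rw [add_eq_affMap, ncard_reflDecomps_affMap h2 (map_one _),
      decompParams_one_eq_empty h2 hd0' (by rwa [norm_toPlane]), Set.ncard_empty]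
end

section
/- Let F_q be a finite field with q elements of characteristic greater than 2, let P ⊆ F_q², and let d ∈ F_q with d ≠ 0. Define Q'_d(P) = {(x,y,z,w) ∈ P⁴ : B(x,z) = B(y,w), ‖x−y‖ = ‖z−w‖ = d} and Π_d(P) = {(x,y) ∈ P² : ‖x−y‖ = d}. Then |Q'_d(P)| ≤ |Π_d(P)|²/q + 2(q−1)·|Π_d(P)|. -/
/-- `Q'_d(P)`: quadruples `(x,y,z,w) ∈ P⁴` with `B(x,z) = B(y,w)` and
`‖x−y‖ = ‖z−w‖ = d`. -/
def Qd {F : Type*} [Field F] (P : Set (F × F)) (d : F) :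
    Set ((F × F) × (F × F) × (F × F) × (F × F)) :=
  {t | t.1 ∈ P ∧ t.2.1 ∈ P ∧ t.2.2.1 ∈ P ∧ t.2.2.2 ∈ P ∧
    bisector t.1 t.2.2.1 = bisector t.2.1 t.2.2.2 ∧
    nrm (t.1 - t.2.1) = d ∧ nrm (t.2.2.1 - t.2.2.2) = d}

/-- `Π_d(P)`: ordered pairs of points of `P` at distance `d`. -/
def Pid {F : Type*} [Field F] (P : Set (F × F)) (d : F) : Set ((F × F) × (F × F)) :=
  {p | p.1 ∈ P ∧ p.2 ∈ P ∧ nrm (p.1 - p.2) = d}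

/-!
Put `u = x - y` and `u' = z - w`. If `B(x,z) = B(y,w)`, the midpoint of `y, w` lies on `B(x,z)`,
and the midpoint of `x, z` and a second point of `B(x,z)` lie on `B(y,w)`; hence `z - x` is
orthogonal to `u + u'` and parallel to `u - u'`, so it is orthogonal to a nonzero vector
`n(u,u')` (`normal u u'`) depending only on `u, u'`. Thus `Q'_d(P)` is covered by the pairs
`(x,z) ∈ P_u × P_{u'}` with `n·x = n·z`, where `P_u = {x ∈ P : x - u ∈ P}` (`diffFiber P u`)
and `∑_u |P_u| = |Π_d(P)|`.

Cauchy–Schwarz over the level sets of `x ↦ n·x` bounds the number of such pairs by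
`|P_u||P_{u'}|/q` plus the mean of the excesses `E(P_u,n) - |P_u|²/q`, where `E(B,n)` counts the
pairs of `B` with equal `n`-value (`collisions n B B`). Two distinct points have equal `n`-value
for at most `q` vectors `n`, so the excesses over all `n ∈ F_q²` add up to at most `q(q-1)|B|`.
The excess is invariant under scaling `n`, and for fixed `u` the vectors `n(u,u')` are pairwise
non-proportional (a line through `-u` meets the circle in at most one further point), so
`∑_{u'} excess ≤ q|P_u|`. Finally `q ≤ 2(q-1)`.
-/

open Finset

lemma sum_mul_le_add_variance {ι : Type*} (s : Finset ι) (hs : s.Nonempty) (a b : ι → ℝ) :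
    ∑ i ∈ s, a i * b i ≤ (∑ i ∈ s, a i) * (∑ i ∈ s, b i) / #s +
      ((∑ i ∈ s, a i ^ 2 - (∑ i ∈ s, a i) ^ 2 / #s) +
        (∑ i ∈ s, b i ^ 2 - (∑ i ∈ s, b i) ^ 2 / #s)) / 2 := by
  have hn : (0 : ℝ) < #s := by exact_mod_cast hs.card_pos
  have hcs := sq_sum_le_card_mul_sum_sq (s := s) (f := fun i => a i - b i)
  have hsq : ∑ i ∈ s, (a i - b i) ^ 2 =
      ∑ i ∈ s, a i ^ 2 - 2 * ∑ i ∈ s, a i * b i + ∑ i ∈ s, b i ^ 2 := by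
    simp only [sub_sq, sum_add_distrib, sum_sub_distrib, mul_sum, mul_assoc]
  rw [sum_sub_distrib, hsq] at hcs
  rw [← sub_nonneg]
  refine (div_nonneg (sub_nonneg.mpr hcs) (by positivity : (0 : ℝ) ≤ 2 * #s)).trans_eq ?_
  field_simp
  ring

namespace FixedDistanceEnergy

open scoped Classical

variable {F : Type*} [Field F]

def dot (a b : F × F) : F := a.1 * b.1 + a.2 * b.2

def rot (a : F × F) : F × F := (-a.2, a.1)

noncomputable def normal (u u' : F × F) : F × F := if u + u' = 0 then rot u else u + u'

section Geometry

lemma mem_bisector_iff {a b c : F × F} :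
    c ∈ bisector a b ↔ 2 * dot c (b - a) = nrm b - nrm a := by
  change nrm (c - a) = nrm (c - b) ↔ _
  simp only [nrm, dot, Prod.fst_sub, Prod.snd_sub]
  constructor <;> intro h <;> linear_combination h

lemma midpoint_add_rot_mem_bisector (h2 : (2 : F) ≠ 0) (a b : F × F) (t : F) :
    (2⁻¹ : F) • (a + b) + t • rot (b - a) ∈ bisector a b := by
  rw [mem_bisector_iff]
  simp only [dot, nrm, rot, Prod.fst_add, Prod.snd_add, Prod.smul_fst, Prod.smul_snd,
    Prod.fst_sub, Prod.snd_sub, smul_eq_mul]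
  field_simp
  ring

variable {x y z w : F × F}

lemma dot_add_eq_zero_of_bisector_eq (h2 : (2 : F) ≠ 0) (hB : bisector x z = bisector y w) :
    dot ((x - y) + (z - w)) (z - x) = 0 := by
  have h := mem_bisector_iff.mp (hB ▸ midpoint_add_rot_mem_bisector h2 y w 0)
  simp only [dot, nrm, rot, Prod.fst_add, Prod.snd_add, Prod.smul_fst, Prod.smul_snd,
    Prod.fst_sub, Prod.snd_sub, smul_eq_mul] at h ⊢
  linear_combination
    -h + ((y.1 + w.1) * (z.1 - x.1) + (y.2 + w.2) * (z.2 - x.2)) * mul_inv_cancel₀ h2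

lemma dot_rot_eq_zero_of_bisector_eq (h2 : (2 : F) ≠ 0) (hB : bisector x z = bisector y w) :
    dot (rot (z - x)) ((x - y) - (z - w)) = 0 := by
  have h₀ := mem_bisector_iff.mp (hB ▸ midpoint_add_rot_mem_bisector h2 x z 0)
  have h₁ := mem_bisector_iff.mp (hB ▸ midpoint_add_rot_mem_bisector h2 x z 1)
  have h : 2 * dot (rot (z - x)) ((x - y) - (z - w)) = 0 := by
    simp only [dot, nrm, rot, Prod.fst_add, Prod.snd_add, Prod.smul_fst, Prod.smul_snd,
      Prod.fst_sub, Prod.snd_sub, smul_eq_mul] at h₀ h₁ ⊢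
    linear_combination h₁ - h₀
  exact (mul_eq_zero.mp h).resolve_left h2

lemma dot_normal_eq_zero_of_bisector_eq (h2 : (2 : F) ≠ 0) (hB : bisector x z = bisector y w) :
    dot (normal (x - y) (z - w)) (z - x) = 0 := by
  unfold normal
  split_ifs with h
  · have h' := dot_rot_eq_zero_of_bisector_eq h2 hB
    rw [eq_neg_of_add_eq_zero_right h, sub_neg_eq_add, ← two_smul F] at h'
    have key : 2 * dot (rot (x - y)) (z - x) = 0 := by
      simp only [dot, rot, Prod.fst_sub, Prod.snd_sub, Prod.smul_fst, Prod.smul_snd,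
        smul_eq_mul] at h' ⊢
      linear_combination -h'
    exact (mul_eq_zero.mp key).resolve_left h2
  · exact dot_add_eq_zero_of_bisector_eq h2 hB

lemma normal_ne_zero {u : F × F} (hu : u ≠ 0) (u' : F × F) : normal u u' ≠ 0 := by
  unfold normal
  split_ifs with h
  · simpa [rot, Prod.ext_iff, and_comm] using hu
  · exact h

lemma normal_comm (u u' : F × F) : normal u' u = normal u u' ∨ normal u' u = -normal u u' := by
  unfold normal
  rw [add_comm u']
  split_ifs with h
  · right
    simp [rot, eq_neg_of_add_eq_zero_right h]
  · left
    rfl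

lemma normal_injective (h2 : (2 : F) ≠ 0) {d : F} (hd : d ≠ 0) {u u₁ u₂ : F × F}
    (hu : nrm u = d) (hu₁ : nrm u₁ = d) (hu₂ : nrm u₂ = d) {c : F} (hc : c ≠ 0)
    (h : normal u u₂ = c • normal u u₁) : u₁ = u₂ := by
  unfold normal at h
  simp only [nrm] at hu hu₁ hu₂
  split_ifs at h with hs₂ hs₁ hs₁
  · rw [eq_neg_of_add_eq_zero_right hs₁, eq_neg_of_add_eq_zero_right hs₂]
  · simp only [rot, Prod.ext_iff, Prod.smul_fst, Prod.smul_snd, Prod.fst_add, Prod.snd_add,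
      smul_eq_mul] at h
    grind
  · simp only [rot, Prod.ext_iff, Prod.smul_fst, Prod.smul_snd, Prod.fst_add, Prod.snd_add,
      smul_eq_mul] at h
    grind
  · simp only [Prod.ext_iff, Prod.smul_fst, Prod.smul_snd, Prod.fst_add, Prod.snd_add,
      smul_eq_mul] at h hs₁
    have e₁ : (u₁.1 - u₂.1) ^ 2 = 0 := by grind
    have e₂ : (u₁.2 - u₂.2) ^ 2 = 0 := by grind
    exact Prod.ext (sub_eq_zero.mp (pow_eq_zero_iff two_ne_zero |>.mp e₁))
      (sub_eq_zero.mp (pow_eq_zero_iff two_ne_zero |>.mp e₂))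

end Geometry

section Energy

noncomputable def collisions (n : F × F) (B B' : Finset (F × F)) : Finset ((F × F) × (F × F)) :=
  (B ×ˢ B').filter fun p => dot n p.1 = dot n p.2

lemma collisions_smul {c : F} (hc : c ≠ 0) (n : F × F) (B B' : Finset (F × F)) :
    collisions (c • n) B B' = collisions n B B' := by
  refine filter_congr fun p _ => ?_
  simp only [dot, Prod.smul_fst, Prod.smul_snd, smul_eq_mul, mul_assoc, ← mul_add,
    mul_right_inj' hc]

variable [Fintype F]

lemma card_collisions (n : F × F) (B B' : Finset (F × F)) :
    #(collisions n B B') = ∑ i : F, #{x ∈ B | dot n x = i} * #{x ∈ B' | dot n x = i} := by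
  rw [card_eq_sum_card_fiberwise (f := fun p => dot n p.1) (t := univ) (by simp)]
  refine sum_congr rfl fun i _ => ?_
  rw [← card_product]
  congr 1
  ext ⟨x, x'⟩
  simp only [collisions, mem_filter, mem_product]
  constructor
  · rintro ⟨⟨⟨hx, hx'⟩, h⟩, rfl⟩
    exact ⟨⟨hx, rfl⟩, hx', h.symm⟩
  · rintro ⟨⟨hx, rfl⟩, hx', h⟩
    exact ⟨⟨⟨hx, hx'⟩, h.symm⟩, rfl⟩

noncomputable def excess (B : Finset (F × F)) (n : F × F) : ℝ :=
  #(collisions n B B) - (#B : ℝ) ^ 2 / Fintype.card F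

lemma sum_card_filter_dot (n : F × F) (B : Finset (F × F)) :
    ∑ i : F, (#{x ∈ B | dot n x = i} : ℝ) = #B := by
  exact_mod_cast (card_eq_sum_card_fiberwise (f := dot n) (t := univ) (by simp)).symm

lemma excess_eq_sum_sq (B : Finset (F × F)) (n : F × F) :
    excess B n = ∑ i : F, (#{x ∈ B | dot n x = i} : ℝ) ^ 2 -
      (∑ i : F, (#{x ∈ B | dot n x = i} : ℝ)) ^ 2 / #(univ : Finset F) := by
  rw [excess, card_collisions, sum_card_filter_dot, card_univ]
  push_cast
  simp only [sq]

lemma excess_nonneg (B : Finset (F × F)) (n : F × F) : 0 ≤ excess B n := by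
  rw [excess_eq_sum_sq, sub_nonneg, div_le_iff₀ (by simp [Fintype.card_pos]), mul_comm]
  exact sq_sum_le_card_mul_sum_sq

lemma excess_smul {c : F} (hc : c ≠ 0) (B : Finset (F × F)) (n : F × F) :
    excess B (c • n) = excess B n := by
  rw [excess, excess, collisions_smul hc]

lemma card_collisions_le (n : F × F) (B B' : Finset (F × F)) :
    (#(collisions n B B') : ℝ) ≤
      #B * #B' / Fintype.card F + (excess B n + excess B' n) / 2 := by
  rw [excess_eq_sum_sq, excess_eq_sum_sq, card_collisions, ← sum_card_filter_dot n B,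
    ← sum_card_filter_dot n B', ← card_univ]
  push_cast
  exact sum_mul_le_add_variance _ univ_nonempty _ _

lemma card_filter_dot_eq_le {a b : F × F} (hab : a ≠ b) :
    #{n : F × F | dot n a = dot n b} ≤ Fintype.card F := by
  rcases ne_or_eq a.2 b.2 with h | h
  · refine card_le_card_of_injOn Prod.fst (by simp) fun n hn m hm hnm => ?_
    rw [mem_coe, mem_filter_univ] at hn hm
    unfold dot at hn hm
    refine Prod.ext hnm (mul_left_cancel₀ (sub_ne_zero.mpr h) ?_)
    linear_combination hn - hm - (a.1 - b.1) * hnm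
  · have h₁ : a.1 ≠ b.1 := fun h₁ => hab (Prod.ext h₁ h)
    refine card_le_card_of_injOn Prod.snd (by simp) fun n hn m hm hnm => ?_
    rw [mem_coe, mem_filter_univ] at hn hm
    unfold dot at hn hm
    refine Prod.ext (mul_left_cancel₀ (sub_ne_zero.mpr h₁) ?_) hnm
    linear_combination hn - hm - (a.2 - b.2) * hnm

lemma sum_card_collisions_le (B : Finset (F × F)) :
    ∑ n : F × F, (#(collisions n B B) : ℝ) ≤
      Fintype.card F ^ 2 * #B + Fintype.card F * (#B ^ 2 - #B) := by
  set q := Fintype.card F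
  have hcount : ∀ p ∈ B ×ˢ B, (#{n : F × F | dot n p.1 = dot n p.2} : ℝ) ≤
      q + if p.1 = p.2 then (q : ℝ) ^ 2 - q else 0 := by
    intro p _
    split_ifs with hp
    · simp [hp, q, Fintype.card_prod, sq]
    · simpa using card_filter_dot_eq_le hp
  have hdiag : #{p ∈ B ×ˢ B | p.1 = p.2} = #B := by rw [← diag_eq_filter, diag_card]
  calc ∑ n : F × F, (#(collisions n B B) : ℝ)
      = ∑ p ∈ B ×ˢ B, (#{n : F × F | dot n p.1 = dot n p.2} : ℝ) := by
        exact_mod_cast sum_card_bipartiteAbove_eq_sum_card_bipartiteBelow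
          (r := fun n (p : (F × F) × (F × F)) => dot n p.1 = dot n p.2)
    _ ≤ ∑ p ∈ B ×ˢ B, ((q : ℝ) + if p.1 = p.2 then (q : ℝ) ^ 2 - q else 0) :=
        sum_le_sum hcount
    _ = q ^ 2 * #B + q * (#B ^ 2 - #B) := by
        rw [sum_add_distrib, sum_ite, sum_const_zero, sum_const, sum_const, hdiag, card_product]
        simp only [nsmul_eq_mul]
        push_cast
        ring

lemma sum_excess_le (B : Finset (F × F)) :
    ∑ n : F × F, excess B n ≤ Fintype.card F * (Fintype.card F - 1) * #B := by
  have hq : (0 : ℝ) < Fintype.card F := by exact_mod_cast Fintype.card_pos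
  have h := sum_card_collisions_le B
  simp only [excess, sum_sub_distrib, sum_const, card_univ, Fintype.card_prod, nsmul_eq_mul]
  push_cast
  rw [← sub_nonneg] at h ⊢
  convert h using 1
  field_simp
  ring

lemma sum_excess_le_of_not_proportional {ι : Type*} (s : Finset ι) (f : ι → F × F)
    (hf₀ : ∀ i ∈ s, f i ≠ 0) (hf : ∀ i ∈ s, ∀ j ∈ s, ∀ c : F, c ≠ 0 → f j = c • f i → i = j)
    (B : Finset (F × F)) :
    ∑ i ∈ s, excess B (f i) ≤ Fintype.card F * #B := by
  have hq : (1 : ℝ) < Fintype.card F := by exact_mod_cast Fintype.one_lt_card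
  set q : ℝ := (Fintype.card F : ℝ)
  have hunits : (#(univ.erase (0 : F)) : ℝ) = q - 1 := by
    rw [card_erase_of_mem (mem_univ _), card_univ, Nat.cast_pred Fintype.card_pos]
  have hinj : Set.InjOn (fun p : ι × F => p.2 • f p.1) ↑(s ×ˢ univ.erase (0 : F)) := by
    rintro ⟨i, c⟩ hic ⟨j, c'⟩ hjc' h
    simp only [coe_product, Set.mem_prod, mem_coe, mem_erase, mem_univ, and_true] at hic hjc' h
    obtain rfl : i = j := hf i hic.1 j hjc'.1 (c'⁻¹ * c) (mul_ne_zero (inv_ne_zero hjc'.2) hic.2)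
      (by rw [mul_smul, h, inv_smul_smul₀ hjc'.2])
    simpa using smul_left_injective F (hf₀ i hic.1) h
  have key : (q - 1) * ∑ i ∈ s, excess B (f i) ≤ (q - 1) * (q * #B) :=
    calc (q - 1) * ∑ i ∈ s, excess B (f i)
        = ∑ p ∈ s ×ˢ univ.erase (0 : F), excess B (p.2 • f p.1) := by
          rw [sum_product, mul_sum]
          refine sum_congr rfl fun i _ => ?_
          rw [sum_congr rfl fun c hc => excess_smul (ne_of_mem_erase hc) B (f i), sum_const,
            nsmul_eq_mul, hunits]
      _ = ∑ n ∈ (s ×ˢ univ.erase (0 : F)).image (fun p => p.2 • f p.1), excess B n :=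
          (sum_image hinj).symm
      _ ≤ ∑ n : F × F, excess B n :=
          sum_le_sum_of_subset_of_nonneg (subset_univ _) fun n _ _ => excess_nonneg B n
      _ ≤ (q - 1) * (q * #B) := by linarith [sum_excess_le B]
  exact le_of_mul_le_mul_left key (by linarith)

end Energy

section Counting

variable [Fintype F]

noncomputable def circle (d : F) : Finset (F × F) := {u | nrm u = d}

lemma mem_circle {d : F} {u : F × F} : u ∈ circle d ↔ nrm u = d := mem_filter_univ u

noncomputable def diffFiber (P : Set (F × F)) (u : F × F) : Finset (F × F) :=
  {x | x ∈ P ∧ x - u ∈ P}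

lemma mem_diffFiber {P : Set (F × F)} {u x : F × F} : x ∈ diffFiber P u ↔ x ∈ P ∧ x - u ∈ P :=
  mem_filter_univ x

lemma excess_normal_comm (B : Finset (F × F)) (u u' : F × F) :
    excess B (normal u' u) = excess B (normal u u') := by
  rcases normal_comm u u' with h | h
  · rw [h]
  · rw [h, ← neg_one_smul F, excess_smul (neg_ne_zero.mpr one_ne_zero)]

lemma sum_excess_normal_le (h2 : (2 : F) ≠ 0) {d : F} (hd : d ≠ 0) {u : F × F} (hu : nrm u = d)
    (B : Finset (F × F)) :
    ∑ u' ∈ circle d, excess B (normal u u') ≤ Fintype.card F * #B := by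
  have hu₀ : u ≠ 0 := by
    rintro rfl
    exact hd (by simp [← hu, nrm])
  refine sum_excess_le_of_not_proportional _ _ (fun _ _ => normal_ne_zero hu₀ _)
    (fun u₁ hu₁ u₂ hu₂ c hc h => ?_) B
  exact normal_injective h2 hd hu (mem_circle.mp hu₁) (mem_circle.mp hu₂) hc h

lemma ncard_Pid (P : Set (F × F)) (d : F) :
    (Pid P d).ncard = ∑ u ∈ circle d, #(diffFiber P u) := by
  rw [Set.ncard_eq_toFinset_card', Pid, Set.toFinset_ofPred,
    card_eq_sum_card_fiberwise (f := fun p => p.1 - p.2) (t := circle d)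
      (fun p hp => by simp_all [mem_circle])]
  refine sum_congr rfl fun u hu => ?_
  have hinj : Function.Injective fun x : F × F => (x, x - u) := fun x x' h => (Prod.ext_iff.mp h).1
  rw [← card_image_of_injective _ hinj]
  congr 1
  ext ⟨x, y⟩
  simp only [mem_filter, mem_univ, true_and, mem_image, mem_diffFiber, Prod.mk.injEq]
  constructor
  · rintro ⟨⟨hx, hy, -⟩, rfl⟩
    exact ⟨x, ⟨hx, by rwa [sub_sub_cancel]⟩, rfl, by rw [sub_sub_cancel]⟩
  · rintro ⟨x, ⟨hx, hxu⟩, rfl, rfl⟩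
    exact ⟨⟨hx, hxu, by rwa [sub_sub_cancel, ← mem_circle]⟩, sub_sub_cancel x u⟩

lemma ncard_Qd_le (h2 : (2 : F) ≠ 0) (P : Set (F × F)) (d : F) :
    (Qd P d).ncard ≤ ∑ u ∈ circle d, ∑ u' ∈ circle d,
      #(collisions (normal u u') (diffFiber P u) (diffFiber P u')) := by
  set cover := (circle d ×ˢ circle d).biUnion fun uu =>
    (collisions (normal uu.1 uu.2) (diffFiber P uu.1) (diffFiber P uu.2)).image
      fun xz => (xz.1, xz.1 - uu.1, xz.2, xz.2 - uu.2)
  have hsub : Qd P d ⊆ ↑cover := by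
    rintro ⟨x, y, z, w⟩ ⟨hx, hy, hz, hw, hB, hxy, hzw⟩
    have horth := dot_normal_eq_zero_of_bisector_eq h2 hB
    rw [mem_coe, mem_biUnion]
    refine ⟨(x - y, z - w), mem_product.mpr ⟨mem_circle.mpr hxy, mem_circle.mpr hzw⟩,
      mem_image.mpr ⟨(x, z), ?_, by simp⟩⟩
    simp only [collisions, mem_filter, mem_product, mem_diffFiber, sub_sub_cancel]
    refine ⟨⟨⟨hx, hy⟩, hz, hw⟩, ?_⟩
    simp only [dot, Prod.fst_sub, Prod.snd_sub] at horth ⊢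
    linear_combination -horth
  calc (Qd P d).ncard ≤ #cover := by
        rw [← Set.ncard_coe_finset]
        exact Set.ncard_le_ncard hsub
    _ ≤ _ := card_biUnion_le
    _ ≤ _ := sum_le_sum fun _ _ => card_image_le
    _ = _ := sum_product _ _ _

lemma ncard_Qd_le_sq_div_add (h2 : (2 : F) ≠ 0) (P : Set (F × F)) {d : F} (hd : d ≠ 0) :
    ((Qd P d).ncard : ℝ) ≤
      (Pid P d).ncard ^ 2 / Fintype.card F + Fintype.card F * (Pid P d).ncard := by
  set q : ℝ := (Fintype.card F : ℝ)
  set C := circle d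
  set A := diffFiber P
  have hu : ∀ u ∈ C, nrm u = d := fun u hu => mem_circle.mp hu
  have hmain : ∑ u ∈ C, ∑ u' ∈ C, (#(A u) : ℝ) * #(A u') = (∑ u ∈ C, (#(A u) : ℝ)) ^ 2 := by
    rw [sq, sum_mul_sum]
  have hleft : ∑ u ∈ C, ∑ u' ∈ C, excess (A u) (normal u u') ≤ q * ∑ u ∈ C, (#(A u) : ℝ) := by
    rw [mul_sum]
    exact sum_le_sum fun u hu' => sum_excess_normal_le h2 hd (hu u hu') (A u)
  have hright : ∑ u ∈ C, ∑ u' ∈ C, excess (A u') (normal u u') ≤ q * ∑ u ∈ C, (#(A u) : ℝ) := by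
    rw [sum_comm, mul_sum]
    refine sum_le_sum fun u' hu' => ?_
    rw [sum_congr rfl fun u _ => (excess_normal_comm (A u') u u').symm]
    exact sum_excess_normal_le h2 hd (hu u' hu') (A u')
  rw [ncard_Pid]
  push_cast
  calc ((Qd P d).ncard : ℝ)
      ≤ ∑ u ∈ C, ∑ u' ∈ C, (#(collisions (normal u u') (A u) (A u')) : ℝ) := by
        exact_mod_cast ncard_Qd_le h2 P d
    _ ≤ ∑ u ∈ C, ∑ u' ∈ C, ((#(A u) : ℝ) * #(A u') / q +
          (excess (A u) (normal u u') + excess (A u') (normal u u')) / 2) :=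
        sum_le_sum fun u _ => sum_le_sum fun u' _ => card_collisions_le _ _ _
    _ = (∑ u ∈ C, (#(A u) : ℝ)) ^ 2 / q + (∑ u ∈ C, ∑ u' ∈ C, excess (A u) (normal u u') +
          ∑ u ∈ C, ∑ u' ∈ C, excess (A u') (normal u u')) / 2 := by
        simp only [sum_add_distrib, ← sum_div, hmain]
    _ ≤ _ := by linarith

end Counting

end FixedDistanceEnergy

/-- For `d ≠ 0`, `|Q'_d(P)| ≤ |Π_d(P)|²/q + 2(q−1)·|Π_d(P)|`. -/
theorem fixed_distance_energy (F : Type) [Field F] [Fintype F]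
    (hchar : 2 < ringChar F) (P : Set (F × F)) (d : F) (hd : d ≠ 0) :
    ((Qd P d).ncard : ℝ) ≤
      ((Pid P d).ncard : ℝ) ^ 2 / (Fintype.card F : ℝ) +
        2 * ((Fintype.card F : ℝ) - 1) * ((Pid P d).ncard : ℝ) := by
  have hq : (2 : ℝ) ≤ Fintype.card F := by exact_mod_cast Fintype.one_lt_card
  calc ((Qd P d).ncard : ℝ)
      ≤ (Pid P d).ncard ^ 2 / Fintype.card F + Fintype.card F * (Pid P d).ncard :=
        FixedDistanceEnergy.ncard_Qd_le_sq_div_add (Ring.two_ne_zero hchar.ne') P hd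
    _ ≤ _ := by gcongr; linarith
end

section
/- There exists an absolute constant C > 0 such that the following holds. Let F_q be a finite field with q elements of characteristic greater than 2, and let P ⊆ F_q². For d ∈ F_q, define Π_d(P) = {(x,y) ∈ P² : ‖x−y‖ = d}. Then Σ_{d ∈ F_q} |Π_d(P)|² ≤ C·(|P|⁴/q + q²·|P|²). -/
open Finset

lemma Finset.sum_sq_card_fiber {ι β : Type*} [DecidableEq β] [Fintype β]
    (s : Finset ι) (g : ι → β) :
    ∑ b, #{i ∈ s | g i = b} ^ 2 = #{p ∈ s ×ˢ s | g p.1 = g p.2} := by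
  rw [card_eq_sum_card_fiberwise (f := fun p => g p.1) (t := univ) (fun _ _ => mem_univ _)]
  refine sum_congr rfl fun b _ => ?_
  rw [sq, ← card_product]
  congr 1
  ext ⟨i, j⟩
  simp only [mem_product, mem_filter]
  constructor
  · rintro ⟨⟨hi, rfl⟩, hj, hji⟩
    exact ⟨⟨⟨hi, hj⟩, hji.symm⟩, rfl⟩
  · rintro ⟨⟨⟨hi, hj⟩, hij⟩, rfl⟩
    exact ⟨⟨hi, rfl⟩, hj, hij.symm⟩

lemma AddChar.norm_sum_sq_eq_sum_sum {G ι : Type*} [AddCommGroup G] [Finite G]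
    (ψ : AddChar G ℂ) (s : Finset ι) (a : ι → G) :
    ((‖∑ i ∈ s, ψ (a i)‖ ^ 2 : ℝ) : ℂ) = ∑ i ∈ s, ∑ j ∈ s, ψ (a i - a j) := by
  rw [Complex.ofReal_pow, ← Complex.mul_conj', map_sum, sum_mul_sum]
  simp_rw [← AddChar.map_neg_eq_conj, ← AddChar.map_add_eq_mul, sub_eq_add_neg]

lemma ncard_Pid_coe {F : Type*} [Field F] [DecidableEq F] (Q : Finset (F × F)) (d : F) :
    (Pid (Q : Set (F × F)) d).ncard = #{p ∈ Q ×ˢ Q | nrm (p.1 - p.2) = d} := by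
  rw [← Set.ncard_coe_finset]
  congr 1
  ext p
  simp [Pid, and_assoc]

section FiniteRing

variable {R ι : Type*} [CommRing R] [Fintype R] [DecidableEq R] {ψ : AddChar R ℂ}

local notation "q" => Fintype.card R

lemma sum_norm_sq_sum_addChar_mul (hψ : ψ.IsPrimitive) (s : Finset ι) (g : ι → R) :
    ∑ t, ‖∑ i ∈ s, ψ (t * g i)‖ ^ 2 = q * ∑ d, (#{i ∈ s | g i = d} : ℝ) ^ 2 := by
  have key : ∑ t, ((‖∑ i ∈ s, ψ (t * g i)‖ ^ 2 : ℝ) : ℂ) =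
      (q * #{p ∈ s ×ˢ s | g p.1 = g p.2} : ℕ) := by
    simp_rw [AddChar.norm_sum_sq_eq_sum_sum, ← mul_sub]
    rw [sum_comm]
    simp_rw [sum_comm (s := univ), AddChar.sum_mulShift _ hψ, sub_eq_zero]
    norm_cast
    rw [← sum_product' (f := fun i j => if g i = g j then q else 0), sum_ite,
      sum_const_zero, add_zero, sum_const, smul_eq_mul, mul_comm]
  rw [← sum_sq_card_fiber] at key
  exact_mod_cast key

lemma sum_addChar_mul_fst_add_mul_snd (hψ : ψ.IsPrimitive) (b : R × R) :
    ∑ x : R × R, ψ (x.1 * b.1 + x.2 * b.2) = if b = 0 then (q : ℂ) ^ 2 else 0 := by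
  simp_rw [AddChar.map_add_eq_mul, Fintype.sum_prod_type, ← mul_sum, ← sum_mul,
    AddChar.sum_mulShift _ hψ]
  by_cases hb : b = 0
  · simp [hb, sq]
  · rw [if_neg hb]
    rw [Prod.ext_iff, Prod.fst_zero, Prod.snd_zero, not_and_or] at hb
    rcases hb with h | h <;> simp [h]

end FiniteRing

section FiniteField

variable {F : Type*} [Field F] [Fintype F] [DecidableEq F] {ψ : AddChar F ℂ}

local notation "q" => Fintype.card F

lemma sum_addChar_mul_nrm_sub_sub_nrm_sub (hψ : ψ.IsPrimitive) (h2 : (2 : F) ≠ 0) {t : F}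
    (ht : t ≠ 0) (y w : F × F) :
    ∑ x : F × F, ψ (t * (nrm (x - y) - nrm (x - w))) = if y = w then (q : ℂ) ^ 2 else 0 := by
  set b : F × F := (-2 * t) • (y - w)
  have affine : ∀ x : F × F,
      t * (nrm (x - y) - nrm (x - w)) = t * (nrm y - nrm w) + (x.1 * b.1 + x.2 * b.2) := by
    intro x
    simp only [b, nrm, Prod.fst_sub, Prod.snd_sub, Prod.smul_fst, Prod.smul_snd, smul_eq_mul]
    ring
  have hb : b = 0 ↔ y = w := by simp [b, h2, ht, sub_eq_zero]
  rw [sum_congr rfl fun x _ => by rw [affine x, AddChar.map_add_eq_mul], ← mul_sum,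
    sum_addChar_mul_fst_add_mul_snd hψ]
  by_cases hyw : y = w
  · simp [hb.2 hyw, hyw]
  · simp [hyw, hb]

lemma sum_norm_sq_sum_addChar_mul_nrm_sub (hψ : ψ.IsPrimitive) (h2 : (2 : F) ≠ 0) {t : F}
    (ht : t ≠ 0) (Q : Finset (F × F)) :
    ∑ x : F × F, ‖∑ y ∈ Q, ψ (t * nrm (x - y))‖ ^ 2 = (q : ℝ) ^ 2 * #Q := by
  have key : ∑ x : F × F, ((‖∑ y ∈ Q, ψ (t * nrm (x - y))‖ ^ 2 : ℝ) : ℂ) = (q : ℂ) ^ 2 * #Q := by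
    simp_rw [AddChar.norm_sum_sq_eq_sum_sum, ← mul_sub]
    rw [sum_comm]
    simp_rw [sum_comm (s := univ), sum_addChar_mul_nrm_sub_sub_nrm_sub hψ h2 ht]
    rw [sum_congr rfl fun y hy => by rw [sum_ite_eq, if_pos hy], sum_const, nsmul_eq_mul,
      mul_comm]
  exact_mod_cast key

lemma norm_sq_sum_addChar_mul_nrm_sub_le (hψ : ψ.IsPrimitive) (h2 : (2 : F) ≠ 0) {t : F}
    (ht : t ≠ 0) (Q : Finset (F × F)) :
    ‖∑ p ∈ Q ×ˢ Q, ψ (t * nrm (p.1 - p.2))‖ ^ 2 ≤ (q : ℝ) ^ 2 * #Q ^ 2 := by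
  rw [sum_product]
  calc _ ≤ (∑ x ∈ Q, ‖∑ y ∈ Q, ψ (t * nrm (x - y))‖) ^ 2 := by gcongr; exact norm_sum_le _ _
    _ ≤ #Q * ∑ x ∈ Q, ‖∑ y ∈ Q, ψ (t * nrm (x - y))‖ ^ 2 := sq_sum_le_card_mul_sum_sq
    _ ≤ #Q * ∑ x : F × F, ‖∑ y ∈ Q, ψ (t * nrm (x - y))‖ ^ 2 := by
        gcongr
        exact subset_univ Q
    _ = (q : ℝ) ^ 2 * #Q ^ 2 := by
        rw [sum_norm_sq_sum_addChar_mul_nrm_sub hψ h2 ht]; ring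

theorem sum_sq_card_filter_nrm_sub_mul_card_le (h2 : (2 : F) ≠ 0) (Q : Finset (F × F)) :
    (∑ d, (#{p ∈ Q ×ˢ Q | nrm (p.1 - p.2) = d} : ℝ) ^ 2) * q ≤ #Q ^ 4 + q ^ 3 * #Q ^ 2 := by
  obtain ⟨ψ, hψ1⟩ := (AddChar.exists_apply_ne_zero (a := (1 : F))).2 one_ne_zero
  have hψ : ψ.IsPrimitive := AddChar.IsPrimitive.of_ne_one (by rintro rfl; exact hψ1 rfl)
  set S : F → ℂ := fun t => ∑ p ∈ Q ×ˢ Q, ψ (t * nrm (p.1 - p.2))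
  have hS0 : ‖S 0‖ ^ 2 = (#Q : ℝ) ^ 4 := by
    simp only [S, zero_mul, AddChar.map_zero_eq_one, sum_const, card_product, nsmul_eq_mul,
      Nat.cast_mul, mul_one, Complex.norm_mul, RCLike.norm_natCast]
    ring
  have hS : ∀ t ∈ univ.erase 0, ‖S t‖ ^ 2 ≤ (q : ℝ) ^ 2 * #Q ^ 2 := fun t ht =>
    norm_sq_sum_addChar_mul_nrm_sub_le hψ h2 (ne_of_mem_erase ht) Q
  calc _ = ∑ t, ‖S t‖ ^ 2 := by rw [sum_norm_sq_sum_addChar_mul hψ]; ring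
    _ = ‖S 0‖ ^ 2 + ∑ t ∈ univ.erase 0, ‖S t‖ ^ 2 := (add_sum_erase _ _ (mem_univ 0)).symm
    _ ≤ #Q ^ 4 + (q - 1 : ℕ) * ((q : ℝ) ^ 2 * #Q ^ 2) := by
        rw [hS0, ← card_univ, ← card_erase_of_mem (mem_univ 0), ← nsmul_eq_mul]
        gcongr
        exact sum_le_card_nsmul _ _ _ hS
    _ ≤ #Q ^ 4 + q * ((q : ℝ) ^ 2 * #Q ^ 2) := by
        gcongr
        exact_mod_cast Nat.sub_le q 1
    _ = _ := by ring

end FiniteField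

/-- The distance-energy bound: `Σ_d |Π_d(P)|² ≤ C·(|P|⁴/q + q²·|P|²)`. -/
theorem distance_energy_bound :
    ∃ C : ℝ, 0 < C ∧
      ∀ (F : Type) [Field F] [Fintype F], 2 < ringChar F →
        ∀ P : Set (F × F),
          (∑ d : F, ((Pid P d).ncard : ℝ) ^ 2) ≤
            C * ((P.ncard : ℝ) ^ 4 / (Fintype.card F : ℝ) +
              (Fintype.card F : ℝ) ^ 2 * (P.ncard : ℝ) ^ 2) := by
  refine ⟨1, one_pos, fun F _ _ hchar P => ?_⟩
  classical
  lift P to Finset (F × F) using P.toFinite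
  have hq : (0 : ℝ) < Fintype.card F := by exact_mod_cast Fintype.card_pos
  have key := sum_sq_card_filter_nrm_sub_mul_card_le (Ring.two_ne_zero hchar.ne') P
  simp_rw [ncard_Pid_coe, Set.ncard_coe_finset, one_mul]
  rw [div_add' _ _ _ hq.ne', le_div_iff₀ hq]
  linarith
end

section
/- Let F_q be a finite field with q elements of characteristic greater than 2. Let P be a finite set of points in F_q² with a weight function w' : P → ℕ₊, and let L be a finite set of affine lines in F_q² with a weight function w : L → ℕ₊. Define the number of weighted incidences I = Σ_{p∈P} Σ_{l∈L, p∈l} w'(p)·w(l). Then I ≤ (Σ_{p∈P} w'(p))·(Σ_{l∈L} w(l))/q + (Σ_{p∈P} w'(p)²)^{1/2}·(Σ_{l∈L} w(l)²)^{1/2}·q^{1/2}. -/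
/-! Write `𝟙[p ∈ l] = 1/q + δ_l(p)` (`lineDeviation`). The `1/q` part contributes the main
term. For the deviations, `∑_p δ_l(p) δ_{l'}(p) = |l ∩ l'| - 1` on a plane of `q²` points with
lines of `q` points, which is `q - 1` on the diagonal and `≤ 0` off it because two lines meet at
most once. Hence `∑_p (∑_l w(l) δ_l(p))² ≤ q ∑_l w(l)²`, and Cauchy–Schwarz over the points
bounds the error term. -/

open scoped Classical

/-- `l` is an affine line in `F²`: a coset of a one-dimensional subspace. -/
def IsAffineLine {F : Type*} [Field F] (l : Set (F × F)) : Prop :=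
  ∃ d p : F × F, d ≠ 0 ∧ l = {x | ∃ t : F, x = t • d + p}

open Finset

section IncidenceBound

variable {α : Type*}

noncomputable def lineDeviation (q : ℕ) (l : Set α) (p : α) : ℝ :=
  (if p ∈ l then 1 else 0) - (q : ℝ)⁻¹

lemma sum_ite_mem_mul_eq (q : ℕ) (P : Finset α) (L : Finset (Set α)) (a : α → ℝ)
    (b : Set α → ℝ) :
    ∑ p ∈ P, ∑ l ∈ L, (if p ∈ l then a p * b l else 0) =
      (∑ p ∈ P, a p) * (∑ l ∈ L, b l) / q + ∑ p ∈ P, a p * ∑ l ∈ L, b l * lineDeviation q l p := by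
  rw [sum_mul_sum, sum_div, ← sum_add_distrib]
  refine sum_congr rfl fun p _ => ?_
  rw [sum_div, mul_sum, ← sum_add_distrib]
  refine sum_congr rfl fun l _ => ?_
  unfold lineDeviation
  split_ifs <;> field_simp <;> ring

variable [Fintype α]

lemma sum_ite_mem_eq_ncard (s : Set α) [DecidablePred (· ∈ s)] :
    ∑ p, (if p ∈ s then (1 : ℝ) else 0) = s.ncard := by
  rw [sum_boole, Set.ncard_eq_toFinset_card']
  congr 2
  ext p
  simp

lemma sum_lineDeviation_mul {q : ℕ} (hq : 0 < q) (hα : Fintype.card α = q ^ 2) {s t : Set α}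
    (hs : s.ncard = q) (ht : t.ncard = q) :
    ∑ p, lineDeviation q s p * lineDeviation q t p = (s ∩ t).ncard - 1 := by
  have hpoint : ∀ p, lineDeviation q s p * lineDeviation q t p =
      (if p ∈ s ∩ t then 1 else 0) - (if p ∈ s then 1 else 0) / q
        - (if p ∈ t then 1 else 0) / q + 1 / (q : ℝ) ^ 2 := by
    intro p
    unfold lineDeviation
    by_cases hps : p ∈ s <;> by_cases hpt : p ∈ t <;> simp [hps, hpt] <;> ring
  simp only [hpoint, sum_add_distrib, sum_sub_distrib, ← sum_div, sum_ite_mem_eq_ncard, hs, ht,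
    sum_const, card_univ, hα, nsmul_eq_mul]
  field_simp
  push_cast
  ring

lemma sum_sq_sum_mul_lineDeviation_le {q : ℕ} (hq : 0 < q) (hα : Fintype.card α = q ^ 2)
    {L : Finset (Set α)} (hL : ∀ l ∈ L, l.ncard = q)
    (hLL : ∀ l ∈ L, ∀ l' ∈ L, l ≠ l' → (l ∩ l').Subsingleton)
    {b : Set α → ℝ} (hb : ∀ l ∈ L, 0 ≤ b l) :
    ∑ p, (∑ l ∈ L, b l * lineDeviation q l p) ^ 2 ≤ q * ∑ l ∈ L, b l ^ 2 := by
  have hexpand : ∑ p, (∑ l ∈ L, b l * lineDeviation q l p) ^ 2 =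
      ∑ l ∈ L, ∑ l' ∈ L, b l * b l' * ∑ p, lineDeviation q l p * lineDeviation q l' p := by
    simp_rw [sq, sum_mul_sum, mul_sum]
    rw [sum_comm]
    refine sum_congr rfl fun l _ => ?_
    rw [sum_comm]
    refine sum_congr rfl fun l' _ => sum_congr rfl fun p _ => by ring
  have hrow : ∀ l ∈ L,
      ∑ l' ∈ L, b l * b l' * ∑ p, lineDeviation q l p * lineDeviation q l' p ≤ q * b l ^ 2 := by
    intro l hl
    have hoff : ∑ l' ∈ L.erase l,
        b l * b l' * ∑ p, lineDeviation q l p * lineDeviation q l' p ≤ 0 := by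
      refine sum_nonpos fun l' hl' => ?_
      obtain ⟨hne, hl'L⟩ := mem_erase.mp hl'
      rw [sum_lineDeviation_mul hq hα (hL l hl) (hL l' hl'L)]
      have hmeet : ((l ∩ l').ncard : ℝ) ≤ 1 := by
        exact_mod_cast (Set.ncard_le_one_iff_subsingleton (s := l ∩ l')).mpr
          (hLL l hl l' hl'L hne.symm)
      exact mul_nonpos_of_nonneg_of_nonpos (mul_nonneg (hb l hl) (hb l' hl'L)) (by linarith)
    rw [← add_sum_erase _ _ hl, sum_lineDeviation_mul hq hα (hL l hl) (hL l hl), Set.inter_self,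
      hL l hl]
    nlinarith [sq_nonneg (b l)]
  rw [hexpand, mul_sum]
  exact sum_le_sum hrow

theorem weighted_incidences_le {q : ℕ} (hq : 0 < q) (hα : Fintype.card α = q ^ 2)
    {L : Finset (Set α)} (hL : ∀ l ∈ L, l.ncard = q)
    (hLL : ∀ l ∈ L, ∀ l' ∈ L, l ≠ l' → (l ∩ l').Subsingleton)
    (P : Finset α) (a : α → ℝ) {b : Set α → ℝ} (hb : ∀ l ∈ L, 0 ≤ b l) :
    ∑ p ∈ P, ∑ l ∈ L, (if p ∈ l then a p * b l else 0) ≤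
      (∑ p ∈ P, a p) * (∑ l ∈ L, b l) / q +
        √(∑ p ∈ P, a p ^ 2) * √(∑ l ∈ L, b l ^ 2) * √(q : ℝ) := by
  rw [sum_ite_mem_mul_eq]
  set S := fun p => ∑ l ∈ L, b l * lineDeviation q l p
  refine add_le_add_right ?_ _
  calc ∑ p ∈ P, a p * S p ≤ √(∑ p ∈ P, a p ^ 2) * √(∑ p ∈ P, S p ^ 2) :=
        Real.sum_mul_le_sqrt_mul_sqrt _ _ _
    _ ≤ √(∑ p ∈ P, a p ^ 2) * √(∑ p, S p ^ 2) := by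
        gcongr
        exact subset_univ P
    _ ≤ √(∑ p ∈ P, a p ^ 2) * √(q * ∑ l ∈ L, b l ^ 2) := by
        gcongr
        exact sum_sq_sum_mul_lineDeviation_le hq hα hL hLL hb
    _ = √(∑ p ∈ P, a p ^ 2) * √(∑ l ∈ L, b l ^ 2) * √(q : ℝ) := by
        rw [Real.sqrt_mul (Nat.cast_nonneg q)]
        ring

end IncidenceBound

namespace IsAffineLine

variable {F : Type*} [Field F] {l l' : Set (F × F)}

lemma ncard_eq [Fintype F] (hl : IsAffineLine l) : l.ncard = Fintype.card F := by
  obtain ⟨d, p, hd, rfl⟩ := hl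
  have hrange : {x | ∃ t : F, x = t • d + p} = Set.range fun t : F => t • d + p := by
    ext x
    simp [eq_comm]
  rw [hrange, Set.ncard_range_of_injective, Nat.card_eq_fintype_card]
  exact fun s t hst => smul_left_injective F hd (add_right_cancel hst)

lemma eq_of_mem (hl : IsAffineLine l) {x y : F × F} (hx : x ∈ l) (hy : y ∈ l) (hxy : x ≠ y) :
    l = {z | ∃ t : F, z = t • (y - x) + x} := by
  obtain ⟨d, p, hd, rfl⟩ := hl
  obtain ⟨a, rfl⟩ := hx
  obtain ⟨b, rfl⟩ := hy
  have hba : b - a ≠ 0 := sub_ne_zero.mpr fun h => hxy (by rw [h])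
  have hyx : (b • d + p) - (a • d + p) = (b - a) • d := by
    rw [sub_smul]
    abel
  ext z
  simp only [Set.mem_ofPred_eq, hyx, smul_smul]
  constructor
  · rintro ⟨c, rfl⟩
    refine ⟨(c - a) / (b - a), ?_⟩
    rw [div_mul_cancel₀ _ hba, sub_smul]
    abel
  · rintro ⟨t, rfl⟩
    refine ⟨t * (b - a) + a, ?_⟩
    rw [add_smul]
    abel

lemma inter_subsingleton (hl : IsAffineLine l) (hl' : IsAffineLine l') (hne : l ≠ l') :
    (l ∩ l').Subsingleton := by
  intro x hx y hy
  by_contra hxy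
  exact hne ((hl.eq_of_mem hx.1 hy.1 hxy).trans (hl'.eq_of_mem hx.2 hy.2 hxy).symm)

end IsAffineLine

theorem weighted_szemeredi_trotter_general (F : Type) [Field F] [Fintype F]
    (P : Finset (F × F)) (L : Finset (Set (F × F)))
    (hL : ∀ l ∈ L, IsAffineLine l)
    (w' : (F × F) → ℕ) (w : Set (F × F) → ℕ) :
    (∑ p ∈ P, ∑ l ∈ L, if p ∈ l then ((w' p : ℝ) * (w l : ℝ)) else 0) ≤
      (∑ p ∈ P, (w' p : ℝ)) * (∑ l ∈ L, (w l : ℝ)) / (Fintype.card F : ℝ) +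
        Real.sqrt (∑ p ∈ P, (w' p : ℝ) ^ 2) * Real.sqrt (∑ l ∈ L, (w l : ℝ) ^ 2) *
          Real.sqrt (Fintype.card F : ℝ) :=
  weighted_incidences_le Fintype.card_pos (by rw [Fintype.card_prod, sq])
    (fun l hl => (hL l hl).ncard_eq)
    (fun l hl l' hl' hne => (hL l hl).inter_subsingleton (hL l' hl') hne)
    P _ fun l _ => Nat.cast_nonneg (w l)

/-- A weighted Szemerédi–Trotter theorem over `F_q`: for a finite (multi)set of points
with weights `w'` and a finite (multi)set of lines with weights `w`, the number of
weighted incidences satisfies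
`I ≤ (Σ w')·(Σ w)/q + (Σ w'²)^{1/2}·(Σ w²)^{1/2}·q^{1/2}`. -/
theorem weighted_szemeredi_trotter (F : Type) [Field F] [Fintype F]
    (hchar : 2 < ringChar F)
    (P : Finset (F × F)) (L : Finset (Set (F × F)))
    (hL : ∀ l ∈ L, IsAffineLine l)
    (w' : (F × F) → ℕ) (w : Set (F × F) → ℕ)
    (hw' : ∀ p ∈ P, 0 < w' p) (hw : ∀ l ∈ L, 0 < w l) :
    (∑ p ∈ P, ∑ l ∈ L, if p ∈ l then ((w' p : ℝ) * (w l : ℝ)) else 0) ≤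
      (∑ p ∈ P, (w' p : ℝ)) * (∑ l ∈ L, (w l : ℝ)) / (Fintype.card F : ℝ) +
        Real.sqrt (∑ p ∈ P, (w' p : ℝ) ^ 2) * Real.sqrt (∑ l ∈ L, (w l : ℝ) ^ 2) *
          Real.sqrt (Fintype.card F : ℝ) :=
  weighted_szemeredi_trotter_general F P L hL w' w
end
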